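/- arXiv:math/0201268 — 6 statements merged into one kernel-verified Lean document; each statement's English description precedes it below -/
import Mathlib

section
/- Let k be a field, s : ℕ, b : Fin s → Fin s → kˣ and a : Fin s → Fin s → ℤ satisfy the Cartan-type relation b m n * b n m = (b m m)^(a m n) for all m, n. Let i, j, kk, l : Fin s satisfy a i kk = 0, a i l = 0, a j kk = 0, together with the linking relations: for all m, (b m i) * (b m kk) = 1, and for all m, (b m j) * (b m l) = 1. Then (b i i)^(a i j) = (b i i)^(a kk l). -/
/-- key computation for the lemma that linked pairs of vertices
carry equal Cartan entries: if `i` is linked to `kk` and `j` is linked to `l`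
(with `a i kk = a i l = a j kk = 0`), then `(b i i)^(a i j) = (b i i)^(a kk l)`. -/
theorem stmt1 {k : Type*} [Field k] {s : ℕ} (b : Fin s → Fin s → kˣ)
    (a : Fin s → Fin s → ℤ)
    (hC : ∀ m n, b m n * b n m = (b m m) ^ (a m n))
    (i j kk l : Fin s)
    (h1 : a i kk = 0) (h2 : a i l = 0) (h3 : a j kk = 0)
    (hik : ∀ m, b m i * b m kk = 1)
    (hjl : ∀ m, b m j * b m l = 1) :
    (b i i) ^ (a i j) = (b i i) ^ (a kk l) := by
  -- b i kk = (b i i)⁻¹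
  have e1 : b i kk = (b i i)⁻¹ := eq_inv_of_mul_eq_one_right (hik i)
  -- b kk i = b i i
  have e2 : b kk i = b i i := by
    have := hC i kk
    rw [h1, zpow_zero, e1] at this
    exact (inv_mul_eq_one.mp this).symm
  -- b kk kk = (b i i)⁻¹
  have e3 : b kk kk = (b kk i)⁻¹ := eq_inv_of_mul_eq_one_right (hik kk)
  -- b kk j = b j i
  have e4 : b kk j = b j i := by
    have := hC j kk
    have e : b j kk = (b j i)⁻¹ := eq_inv_of_mul_eq_one_right (hik j)
    rw [h3, zpow_zero, e] at this
    exact (inv_mul_eq_one.mp this).symm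
  -- b l i = b i j
  have e5 : b l i = b i j := by
    have := hC i l
    have e : b i l = (b i j)⁻¹ := eq_inv_of_mul_eq_one_right (hjl i)
    rw [h2, zpow_zero, e] at this
    exact (inv_mul_eq_one.mp this).symm
  have e6 : b kk l = (b kk j)⁻¹ := eq_inv_of_mul_eq_one_right (hjl kk)
  have e7 : b l kk = (b l i)⁻¹ := eq_inv_of_mul_eq_one_right (hik l)
  have key := hC kk l
  rw [e6, e7, e4, e5, e3, e2] at key
  -- key : (b j i)⁻¹ * (b i j)⁻¹ = ((b i i)⁻¹)^(a kk l)
  have hij := hC i j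
  rw [← hij]
  have := congrArg Inv.inv key
  simpa [mul_comm] using this
end

section
/- Let k be a field, s : ℕ, b : Fin s → Fin s → kˣ and a : Fin s → Fin s → ℤ satisfy the Cartan-type relation b m n * b n m = (b m m)^(a m n) for all m, n. Let i, j, kk, l : Fin s satisfy a i kk = 0, a i l = 0, a j kk = 0, together with the linking relations: for all m, (b m i) * (b m kk) = 1, and for all m, (b m j) * (b m l) = 1. Assume -3 ≤ a i j ≤ 0 and -3 ≤ a kk l ≤ 0 (as holds for off-diagonal entries of a Cartan matrix of finite type), and assume (b i i)^d ≠ 1 for d = 1, 2, 3. Then a i j = a kk l. -/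
/-- Lemma 3.2 of the paper, finite case: if `i` is linkable to `kk`
and `j` is linkable to `l`, the off-diagonal Cartan entries satisfy
`-3 ≤ a i j ≤ 0` and `-3 ≤ a kk l ≤ 0`, and `(b i i)^d ≠ 1` for `d = 1, 2, 3`,
then `a i j = a kk l`. -/
theorem stmt2 {k : Type*} [Field k] {s : ℕ} (b : Fin s → Fin s → kˣ)
    (a : Fin s → Fin s → ℤ)
    (hC : ∀ m n, b m n * b n m = (b m m) ^ (a m n))
    (i j kk l : Fin s)
    (h1 : a i kk = 0) (h2 : a i l = 0) (h3 : a j kk = 0)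
    (hik : ∀ m, b m i * b m kk = 1)
    (hjl : ∀ m, b m j * b m l = 1)
    (hij1 : -3 ≤ a i j) (hij2 : a i j ≤ 0)
    (hkl1 : -3 ≤ a kk l) (hkl2 : a kk l ≤ 0)
    (hord : ∀ d : ℕ, d = 1 ∨ d = 2 ∨ d = 3 → (b i i) ^ d ≠ 1) :
    a i j = a kk l := by
  have e1 : b i kk = (b i i)⁻¹ := eq_inv_of_mul_eq_one_right (hik i)
  have e2 : b kk i = b i i := by
    have h := hC i kk
    rw [h1, zpow_zero, e1] at h
    have h' := eq_inv_of_mul_eq_one_right h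
    rwa [inv_inv] at h'
  have e3 : b kk kk = (b i i)⁻¹ := by
    have h := hik kk
    rw [e2] at h
    exact eq_inv_of_mul_eq_one_right h
  have e4 : b i l = (b i j)⁻¹ := eq_inv_of_mul_eq_one_right (hjl i)
  have e5 : b l i = b i j := by
    have h := hC i l
    rw [h2, zpow_zero, e4] at h
    have h' := eq_inv_of_mul_eq_one_right h
    rwa [inv_inv] at h'
  have e6 : b l kk = (b i j)⁻¹ := by
    have h := hik l
    rw [e5] at h
    exact eq_inv_of_mul_eq_one_right h
  have e7 : b j kk = (b j i)⁻¹ := eq_inv_of_mul_eq_one_right (hik j)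
  have e8 : b kk j = b j i := by
    have h := hC j kk
    rw [h3, zpow_zero, e7] at h
    have h' := eq_inv_of_mul_eq_one_right h
    rwa [inv_inv] at h'
  have e9 : b kk l = (b j i)⁻¹ := by
    have h := hjl kk
    rw [e8] at h
    exact eq_inv_of_mul_eq_one_right h
  have key : ((b i i) ^ (a i j))⁻¹ = ((b i i) ^ (a kk l))⁻¹ := by
    calc ((b i i) ^ (a i j))⁻¹ = (b i j * b j i)⁻¹ := by rw [hC i j]
      _ = (b j i)⁻¹ * (b i j)⁻¹ := by rw [mul_inv, mul_comm]
      _ = b kk l * b l kk := by rw [e9, e6]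
      _ = (b kk kk) ^ (a kk l) := hC kk l
      _ = ((b i i) ^ (a kk l))⁻¹ := by rw [e3, inv_zpow]
  have key2 : (b i i) ^ (a i j) = (b i i) ^ (a kk l) := inv_injective key
  have hz : (b i i) ^ (a i j - a kk l) = 1 := by
    rw [zpow_sub, key2]; exact mul_inv_cancel _
  set n : ℤ := a i j - a kk l with hn
  by_contra hne
  have hne' : n ≠ 0 := by omega
  have hnat : (b i i) ^ n.natAbs = 1 := by
    rcases Int.natAbs_eq n with h | h
    · rw [← zpow_natCast, ← h, hz]
    · rw [← zpow_natCast, ← neg_neg (n.natAbs : ℤ), ← h, zpow_neg, hz, inv_one]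
  exact hord n.natAbs (by omega) hnat
end

section
/- Let k be a field, s : ℕ, b : Fin s → Fin s → kˣ and a : Fin s → Fin s → ℤ satisfy the Cartan-type relation b m n * b n m = (b m m)^(a m n) for all m, n. Let i, j, kk, l : Fin s satisfy a i kk = 0, a i l = 0, a j kk = 0, together with the linking relations: for all m, (b m i) * (b m kk) = 1, and for all m, (b m j) * (b m l) = 1. Assume -4 ≤ a i j ≤ 0 and -4 ≤ a kk l ≤ 0 (as holds for off-diagonal entries of a Cartan matrix of affine type), and assume the multiplicative order of b i i is a prime number greater than 3. Then a i j = a kk l. -/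
/-- Lemma 3.8 of the paper, affine case: if `i` is linkable to `kk`
and `j` is linkable to `l`, the off-diagonal Cartan entries satisfy
`-4 ≤ a i j ≤ 0` and `-4 ≤ a kk l ≤ 0`, and the multiplicative order of
`b i i` is a prime greater than 3, then `a i j = a kk l`. -/
theorem stmt3 {k : Type*} [Field k] {s : ℕ} (b : Fin s → Fin s → kˣ)
    (a : Fin s → Fin s → ℤ)
    (hC : ∀ m n, b m n * b n m = (b m m) ^ (a m n))
    (i j kk l : Fin s)
    (h1 : a i kk = 0) (h2 : a i l = 0) (h3 : a j kk = 0)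
    (hik : ∀ m, b m i * b m kk = 1)
    (hjl : ∀ m, b m j * b m l = 1)
    (hij1 : -4 ≤ a i j) (hij2 : a i j ≤ 0)
    (hkl1 : -4 ≤ a kk l) (hkl2 : a kk l ≤ 0)
    (hord : (orderOf (b i i)).Prime ∧ 3 < orderOf (b i i)) :
    a i j = a kk l := by
  -- basic consequences of the Cartan relation with zero entries
  have e1 : b i kk * b kk i = 1 := by have := hC i kk; rwa [h1, zpow_zero] at this
  have e2 : b i l * b l i = 1 := by have := hC i l; rwa [h2, zpow_zero] at this
  have e3 : b j kk * b kk j = 1 := by have := hC j kk; rwa [h3, zpow_zero] at this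
  have A : b i kk = (b i i)⁻¹ := by
    have h := hik i
    rw [mul_comm] at h
    exact eq_inv_of_mul_eq_one_left h
  have B : b kk i = b i i := by
    rw [A] at e1
    calc b kk i = (b i i) * ((b i i)⁻¹ * b kk i) := by group
    _ = b i i := by rw [e1, mul_one]
  have C : b kk kk = (b i i)⁻¹ := by
    have h := hik kk
    rw [B] at h
    rw [mul_comm] at h
    exact eq_inv_of_mul_eq_one_left h
  have D : b l i = b i j := by
    have h := hjl i
    have hil : b i l = (b i j)⁻¹ := by rw [mul_comm] at h; exact eq_inv_of_mul_eq_one_left h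
    rw [hil] at e2
    calc b l i = (b i j) * ((b i j)⁻¹ * b l i) := by group
    _ = b i j := by rw [e2, mul_one]
  have E : b kk j = b j i := by
    have h := hik j
    have hjk : b j kk = (b j i)⁻¹ := by rw [mul_comm] at h; exact eq_inv_of_mul_eq_one_left h
    rw [hjk] at e3
    calc b kk j = (b j i) * ((b j i)⁻¹ * b kk j) := by group
    _ = b j i := by rw [e3, mul_one]
  have F : b kk l = (b j i)⁻¹ := by
    have h := hjl kk
    rw [E, mul_comm] at h
    exact eq_inv_of_mul_eq_one_left h
  have G : b l kk = (b i j)⁻¹ := by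
    have h := hik l
    rw [D, mul_comm] at h
    exact eq_inv_of_mul_eq_one_left h
  -- the key power identity
  have key : (b i i) ^ (a kk l - a i j) = 1 := by
    have h := hC kk l
    rw [F, G, C, inv_zpow, ← zpow_neg] at h
    have hij := hC i j
    have h2' : (b i i) ^ (-a i j) = (b i i) ^ (-a kk l) := by
      rw [← h, zpow_neg, ← hij]; group
    calc (b i i) ^ (a kk l - a i j)
        = (b i i) ^ (a kk l) * (b i i) ^ (-a i j) := by
          rw [← zpow_add]; ring_nf
      _ = (b i i) ^ (a kk l) * (b i i) ^ (-a kk l) := by rw [h2']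
      _ = 1 := by rw [← zpow_add]; simp
  -- conclude from the order
  have hdvd : ((orderOf (b i i) : ℤ)) ∣ (a kk l - a i j) :=
    orderOf_dvd_iff_zpow_eq_one.mpr key
  have hp5 : 5 ≤ orderOf (b i i) := by
    rcases hord with ⟨hp, h3'⟩
    have h4 : orderOf (b i i) ≠ 4 := by
      intro h; rw [h] at hp; norm_num at hp
    omega
  by_contra hne
  have hne' : a kk l - a i j ≠ 0 := by omega
  have hle : (orderOf (b i i) : ℤ) ≤ |a kk l - a i j| :=
    Int.le_of_dvd (abs_pos.mpr hne') ((dvd_abs _ _).mpr hdvd)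
  have : |a kk l - a i j| ≤ 4 := by rw [abs_le]; omega
  have : (5:ℤ) ≤ orderOf (b i i) := by exact_mod_cast hp5
  omega
end

section
/- Let k be a field and u, v ∈ kˣ units, and let A, B : ℤ. Assume u^(1 - A) * v = 1 and v^(1 - B) * u = 1. Then u^(A*B - A - B) = 1. -/
/-- if `u^(1 - A) * v = 1` and `v^(1 - B) * u = 1`, then
`u^(A*B - A - B) = 1` (self-linking identity of the paper). -/
theorem stmt4 {k : Type*} [Field k] (u v : kˣ) (A B : ℤ)
    (h1 : u ^ (1 - A) * v = 1) (h2 : v ^ (1 - B) * u = 1) :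
    u ^ (A * B - A - B) = 1 := by
  have hv : v = u ^ (A - 1) := by
    have := mul_eq_one_iff_inv_eq.mp h1
    rw [← this, ← zpow_neg]; ring_nf
  rw [hv, ← zpow_mul, ← zpow_add_one] at h2
  have : (A - 1) * (1 - B) + 1 = -(A * B - A - B) := by ring
  rw [this, zpow_neg] at h2
  exact inv_eq_one.mp h2
end

section
/- Let p be a prime with p > 3. Then the number of pairs (n, m) ∈ (ZMod p) × (ZMod p) satisfying n^2 - n*m + m^2 + m + 1 = 0 equals p - 1 if p ≡ 1 (mod 6), and equals p + 1 if p ≡ 5 (mod 6). (In the paper's formulation: for every prime p = 6z ± 1 the equation has exactly 6z solutions.) -/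
open Finset

section Aux

variable (p : ℕ) [Fact p.Prime]

/-- fiber count of the form v^2+3u^2 -/
private def Ncnt (c : ZMod p) : ℕ :=
  (univ.filter (fun uv : ZMod p × ZMod p => uv.2 ^ 2 + 3 * uv.1 ^ 2 = c)).card

private lemma sum_Ncnt : ∑ c : ZMod p, Ncnt p c = p ^ 2 := by
  classical
  have := Finset.card_eq_sum_card_fiberwise
    (f := fun uv : ZMod p × ZMod p => uv.2 ^ 2 + 3 * uv.1 ^ 2)
    (s := univ) (t := univ) (fun x _ => mem_univ _)
  simp only [Ncnt]
  rw [← this]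
  simp [Fintype.card_prod, ZMod.card, sq]

private lemma universal (hodd : p % 2 = 1) (c : ZMod p) (h3 : (3 : ZMod p) ≠ 0) :
    ∃ x y : ZMod p, y ^ 2 + 3 * x ^ 2 = c := by
  classical
  obtain ⟨a, b, hab⟩ := FiniteField.exists_root_sum_quadratic
    (f := Polynomial.C (3 : ZMod p) * Polynomial.X ^ 2)
    (g := Polynomial.X ^ 2 - Polynomial.C c)
    (Polynomial.degree_C_mul_X_pow 2 h3)
    (Polynomial.degree_X_pow_sub_C (by norm_num) c)
    (by rwa [ZMod.card])
  refine ⟨a, b, ?_⟩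
  simp only [Polynomial.eval_mul, Polynomial.eval_pow, Polynomial.eval_C, Polynomial.eval_X,
    Polynomial.eval_sub] at hab
  linear_combination hab

private lemma Ncnt_eq_of_ne_zero (hodd : p % 2 = 1) (h3 : (3 : ZMod p) ≠ 0)
    {c : ZMod p} (hc : c ≠ 0) : Ncnt p c = Ncnt p 1 := by
  classical
  obtain ⟨x0, y0, hxy⟩ := universal p hodd c h3
  unfold Ncnt
  refine (Finset.card_bij'
    (i := fun uv _ => ((uv.2 * x0 + uv.1 * y0, uv.2 * y0 - 3 * uv.1 * x0) : ZMod p × ZMod p))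
    (j := fun UV _ => (((UV.1 * y0 - UV.2 * x0) / c, (UV.2 * y0 + 3 * UV.1 * x0) / c)
      : ZMod p × ZMod p)) ?_ ?_ ?_ ?_).symm
  · intro a ha
    simp only [mem_filter, mem_univ, true_and] at ha ⊢
    linear_combination (y0 ^ 2 + 3 * x0 ^ 2) * ha + hxy
  · intro a ha
    simp only [mem_filter, mem_univ, true_and] at ha ⊢
    have hc2 : c ^ 2 ≠ 0 := pow_ne_zero _ hc
    rw [div_pow, div_pow, ← mul_div_assoc, ← add_div, div_eq_one_iff_eq hc2]
    linear_combination (y0 ^ 2 + 3 * x0 ^ 2) * ha + c * hxy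
  · intro a ha
    simp only [mem_filter, mem_univ, true_and] at ha
    ext
    · field_simp
      linear_combination a.1 * hxy
    · field_simp
      linear_combination a.2 * hxy
  · intro a ha
    simp only [mem_filter, mem_univ, true_and] at ha
    ext
    · field_simp
      linear_combination a.1 * hxy
    · field_simp
      linear_combination a.2 * hxy

private lemma line_card (g : ZMod p → ZMod p) :
    (univ.filter (fun uv : ZMod p × ZMod p => uv.2 = g uv.1)).card = p := by
  classical
  have : (univ.filter (fun uv : ZMod p × ZMod p => uv.2 = g uv.1)).card
      = (univ : Finset (ZMod p)).card := by
    refine Finset.card_bij' (i := fun uv _ => uv.1) (j := fun u _ => (u, g u))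
      (fun a _ => mem_univ _) (fun a _ => by simp) ?_ (fun a _ => rfl)
    intro a ha
    simp only [mem_filter, mem_univ, true_and] at ha
    exact Prod.ext rfl ha.symm
  rw [this, card_univ, ZMod.card]

end Aux

/-- for a prime `p > 3`, the equation
`n² - nm + m² + m + 1 = 0` in `ZMod p` has exactly `p - 1` solutions if
`p ≡ 1 (mod 6)` and exactly `p + 1` solutions if `p ≡ 5 (mod 6)`. -/
theorem stmt9 (p : ℕ) (hp : p.Prime) (h3 : 3 < p) :
    (p % 6 = 1 →
      Nat.card {nm : ZMod p × ZMod p //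
        nm.1 ^ 2 - nm.1 * nm.2 + nm.2 ^ 2 + nm.2 + 1 = 0} = p - 1) ∧
    (p % 6 = 5 →
      Nat.card {nm : ZMod p × ZMod p //
        nm.1 ^ 2 - nm.1 * nm.2 + nm.2 ^ 2 + nm.2 + 1 = 0} = p + 1) := by
  classical
  haveI : Fact p.Prime := ⟨hp⟩
  have hodd : p % 2 = 1 := Nat.odd_iff.mp (hp.odd_of_ne_two (by omega))
  have h2z : (2 : ZMod p) ≠ 0 := by
    have := (ZMod.natCast_eq_zero_iff 2 p).not.mpr
      (by intro h; exact absurd (Nat.le_of_dvd (by norm_num) h) (by omega))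
    simpa using this
  have h3z : (3 : ZMod p) ≠ 0 := by
    have := (ZMod.natCast_eq_zero_iff 3 p).not.mpr
      (by intro h; exact absurd (Nat.le_of_dvd (by norm_num) h) (by omega))
    simpa using this
  -- change of variables
  have hmain : Nat.card {nm : ZMod p × ZMod p //
      nm.1 ^ 2 - nm.1 * nm.2 + nm.2 ^ 2 + nm.2 + 1 = 0} = Ncnt p (-8) := by
    have i2m : (2 : ZMod p) * (2 : ZMod p)⁻¹ = 1 := mul_inv_cancel₀ h2z
    have i3m : (3 : ZMod p) * (3 : ZMod p)⁻¹ = 1 := mul_inv_cancel₀ h3z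
    set i2 : ZMod p := (2 : ZMod p)⁻¹ with hi2def
    set i3 : ZMod p := (3 : ZMod p)⁻¹ with hi3def
    have h12z : (12 : ZMod p) ≠ 0 := by
      intro h
      have h4 : (2 : ZMod p) * (2 * 3) = 0 := by linear_combination h
      rcases mul_eq_zero.mp h4 with h' | h'
      · exact h2z h'
      · rcases mul_eq_zero.mp h' with h'' | h''
        · exact h2z h''
        · exact h3z h''
    have e : {nm : ZMod p × ZMod p // nm.1 ^ 2 - nm.1 * nm.2 + nm.2 ^ 2 + nm.2 + 1 = 0}
        ≃ {uv : ZMod p × ZMod p // uv.2 ^ 2 + 3 * uv.1 ^ 2 = -8} :=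
      { toFun := fun x => ⟨(2 * x.1.1 - x.1.2, 3 * x.1.2 + 2), by
          have h := x.2; linear_combination 12 * h⟩
        invFun := fun x => ⟨(i2 * (x.1.1 + i3 * (x.1.2 - 2)), i3 * (x.1.2 - 2)), by
          have h := x.2
          set m : ZMod p := i3 * (x.1.2 - 2) with hm
          set n : ZMod p := i2 * (x.1.1 + m) with hn
          have hV : 3 * m + 2 = x.1.2 := by rw [hm]; linear_combination (x.1.2 - 2) * i3m
          have hU : 2 * n - m = x.1.1 := by rw [hn]; linear_combination (x.1.1 + m) * i2m
          have key : (12 : ZMod p) * (n ^ 2 - n * m + m ^ 2 + m + 1) = 0 := by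
            linear_combination h + 3 * (2 * n - m + x.1.1) * hU + (3 * m + 2 + x.1.2) * hV
          rcases mul_eq_zero.mp key with h' | h'
          · exact absurd h' h12z
          · exact h'⟩
        left_inv := fun x => by
          apply Subtype.ext
          apply Prod.ext
          · show i2 * ((2 * x.1.1 - x.1.2) + i3 * ((3 * x.1.2 + 2) - 2)) = x.1.1
            linear_combination x.1.1 * i2m + i2 * x.1.2 * i3m
          · show i3 * ((3 * x.1.2 + 2) - 2) = x.1.2
            linear_combination x.1.2 * i3m
        right_inv := fun x => by
          apply Subtype.ext
          apply Prod.ext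
          · show 2 * (i2 * (x.1.1 + i3 * (x.1.2 - 2))) - i3 * (x.1.2 - 2) = x.1.1
            linear_combination (x.1.1 + i3 * (x.1.2 - 2)) * i2m
          · show 3 * (i3 * (x.1.2 - 2)) + 2 = x.1.2
            linear_combination (x.1.2 - 2) * i3m }
    rw [Nat.card_congr e, Nat.card_eq_fintype_card, Fintype.card_subtype, Ncnt]
  have h8 : (-8 : ZMod p) ≠ 0 := by
    intro h
    apply h2z
    have : (2 : ZMod p) ^ 3 = 0 := by linear_combination -h
    exact pow_eq_zero_iff (by norm_num) |>.mp this
  have hN8 : Ncnt p (-8) = Ncnt p 1 := Ncnt_eq_of_ne_zero p hodd h3z h8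
  -- total sum
  have hsum : Ncnt p 0 + (p - 1) * Ncnt p 1 = p ^ 2 := by
    have := sum_Ncnt p
    rw [← Finset.add_sum_erase _ _ (mem_univ (0 : ZMod p))] at this
    rw [Finset.sum_congr rfl (fun c hc => Ncnt_eq_of_ne_zero p hodd h3z
      (by simpa using (Finset.mem_erase.mp hc).1))] at this
    rw [Finset.sum_const, smul_eq_mul] at this
    rwa [Finset.card_erase_of_mem (mem_univ _), card_univ, ZMod.card] at this
  constructor
  · -- p % 6 = 1 : -3 is a square
    intro h1
    -- get element of order 3
    obtain ⟨g, hg⟩ := IsCyclic.exists_ofOrder_eq_natCard (α := (ZMod p)ˣ)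
    have hcard : Nat.card (ZMod p)ˣ = p - 1 := by
      rw [Nat.card_eq_fintype_card, ZMod.card_units_eq_totient, Nat.totient_prime hp]
    rw [hcard] at hg
    have hdvd : 3 ∣ p - 1 := by omega
    set k := (p - 1) / 3 with hk
    have hk3 : 3 * k = p - 1 := Nat.mul_div_cancel' hdvd
    have hω3 : (g ^ k) ^ 3 = 1 := by
      rw [← pow_mul, mul_comm, hk3, ← hg, pow_orderOf_eq_one]
    have hωne : g ^ k ≠ 1 := by
      intro h
      have := orderOf_dvd_of_pow_eq_one h
      rw [hg] at this
      have hkpos : 0 < k := by omega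
      have := Nat.le_of_dvd hkpos this
      omega
    set u : ZMod p := ((g ^ k : (ZMod p)ˣ) : ZMod p) with hu
    have hu3 : u ^ 3 = 1 := by
      rw [hu, ← Units.val_pow_eq_pow_val, hω3, Units.val_one]
    have hune : u ≠ 1 := fun h => hωne (Units.ext h)
    have hquad : u ^ 2 + u + 1 = 0 := by
      have : (u - 1) * (u ^ 2 + u + 1) = 0 := by linear_combination hu3
      rcases mul_eq_zero.mp this with h | h
      · exact absurd (by linear_combination h) hune
      · exact h
    set s : ZMod p := 2 * u + 1 with hs
    have hs2 : s ^ 2 = -3 := by rw [hs]; linear_combination 4 * hquad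
    have hsne : s ≠ 0 := by
      intro h
      rw [h] at hs2
      exact h3z (by linear_combination hs2)
    -- N 0 = 2p - 1
    have hN0 : Ncnt p 0 + 1 = 2 * p := by
      have hsplit : (univ.filter (fun uv : ZMod p × ZMod p => uv.2 ^ 2 + 3 * uv.1 ^ 2 = 0))
          = (univ.filter (fun uv : ZMod p × ZMod p => uv.2 = s * uv.1))
            ∪ (univ.filter (fun uv : ZMod p × ZMod p => uv.2 = -s * uv.1)) := by
        rw [← Finset.filter_or]
        apply Finset.filter_congr
        intro uv _
        constructor
        · intro h
          have : (uv.2 - s * uv.1) * (uv.2 + s * uv.1) = 0 := by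
            linear_combination h - uv.1 ^ 2 * hs2
          rcases mul_eq_zero.mp this with h' | h'
          · exact Or.inl (by linear_combination h')
          · exact Or.inr (by linear_combination h')
        · rintro (h | h) <;> · rw [h]; linear_combination uv.1 ^ 2 * hs2
      have hinter : (univ.filter (fun uv : ZMod p × ZMod p => uv.2 = s * uv.1))
          ∩ (univ.filter (fun uv : ZMod p × ZMod p => uv.2 = -s * uv.1))
          = {((0 : ZMod p), (0 : ZMod p))} := by
        rw [← Finset.filter_and]
        ext uv
        simp only [mem_filter, mem_univ, true_and, mem_singleton]
        constructor
        · rintro ⟨ha, hb⟩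
          have h1v : (2 : ZMod p) * (s * uv.1) = 0 := by linear_combination hb - ha
          have h1' : s * uv.1 = 0 := by
            rcases mul_eq_zero.mp h1v with h | h
            · exact absurd h h2z
            · exact h
          have hu0 : uv.1 = 0 := by
            rcases mul_eq_zero.mp h1' with h | h
            · exact absurd h hsne
            · exact h
          have hv0 : uv.2 = 0 := by rw [ha, hu0, mul_zero]
          exact Prod.ext hu0 hv0
        · rintro rfl; simp
      have := Finset.card_union_add_card_inter
        (univ.filter (fun uv : ZMod p × ZMod p => uv.2 = s * uv.1))
        (univ.filter (fun uv : ZMod p × ZMod p => uv.2 = -s * uv.1))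
      rw [hinter, Finset.card_singleton, line_card p (fun x => s * x),
        line_card p (fun x => -s * x)] at this
      unfold Ncnt
      rw [hsplit]
      omega
    -- finish arithmetic
    rw [hmain, hN8]
    have hp4 : 4 ≤ p := by omega
    have key : (p - 1) * Ncnt p 1 = (p - 1) * (p - 1) := by
      have hN0' : Ncnt p 0 = 2 * p - 1 := by omega
      rw [hN0'] at hsum
      have : 2 * p - 1 + (p - 1) * Ncnt p 1 = p ^ 2 := hsum
      have hge : 1 ≤ 2 * p := by omega
      zify [hge, show 1 ≤ p by omega] at this ⊢
      nlinarith [this]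
    exact Nat.eq_of_mul_eq_mul_left (by omega) key
  · -- p % 6 = 5 : -3 is not a square
    intro h5
    have hns : ∀ t : ZMod p, t ^ 2 ≠ -3 := by
      intro t ht
      have htne : t ≠ 0 := by
        intro h; rw [h] at ht; exact h3z (by linear_combination ht)
      have i2m : (2 : ZMod p) * (2 : ZMod p)⁻¹ = 1 := mul_inv_cancel₀ h2z
      set i2 : ZMod p := (2 : ZMod p)⁻¹ with hi2def
      set ω : ZMod p := (t - 1) * i2 with hω
      have hquad : ω ^ 2 + ω + 1 = 0 := by
        rw [hω]
        linear_combination i2 ^ 2 * ht + (-(t + 1) * i2 - 1) * i2m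
      have hω3 : ω ^ 3 = 1 := by linear_combination (ω - 1) * hquad
      have hωne1 : ω ≠ 1 := by
        intro h; rw [h] at hquad; exact h3z (by linear_combination hquad)
      have hωne0 : ω ≠ 0 := by
        intro h; rw [h] at hquad
        simpa using hquad
      have hfermat : ω ^ (p - 1) = 1 := ZMod.pow_card_sub_one_eq_one hωne0
      have hdecomp : p - 1 = 3 * (p / 3) + 1 := by omega
      rw [hdecomp, pow_add, pow_mul, hω3, one_pow, pow_one, one_mul] at hfermat
      exact hωne1 hfermat
    have hN0 : Ncnt p 0 = 1 := by
      unfold Ncnt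
      have : (univ.filter (fun uv : ZMod p × ZMod p => uv.2 ^ 2 + 3 * uv.1 ^ 2 = 0))
          = {((0 : ZMod p), (0 : ZMod p))} := by
        ext uv
        simp only [mem_filter, mem_univ, true_and, mem_singleton]
        constructor
        · intro h
          have hu0 : uv.1 = 0 := by
            by_contra hne
            apply hns (uv.2 / uv.1)
            field_simp
            linear_combination h
          have hv0 : uv.2 = 0 := by
            have : uv.2 ^ 2 = 0 := by rw [hu0] at h; linear_combination h
            exact pow_eq_zero_iff (by norm_num) |>.mp this
          exact Prod.ext hu0 hv0
        · rintro rfl; simp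
      rw [this, Finset.card_singleton]
    rw [hmain, hN8]
    rw [hN0] at hsum
    have key : (p - 1) * Ncnt p 1 = (p - 1) * (p + 1) := by
      zify [show 1 ≤ p by omega] at hsum ⊢
      nlinarith [hsum]
    exact Nat.eq_of_mul_eq_mul_left (by omega) key
end

section
/- Let p be a prime with p > 3. Then the following are equivalent: (1) there exist n, m, k, l ∈ ZMod p with n^2 - n*m + m^2 + m + 1 = 0, k^2 - k*l + l^2 + 1 = 0, and k*(m - 2*n) + l*(n - 2*m - 1) + 1 = 0; (2) 5 is a square in ZMod p (i.e. IsSquare (5 : ZMod p)). -/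
open Polynomial

/-- for a prime `p > 3`, the system (magic), (pure), (mix) of
the paper has a solution in `ZMod p` iff 5 is a square modulo `p`. -/
theorem stmt10 (p : ℕ) (hp : p.Prime) (h3 : 3 < p) :
    (∃ n m k l : ZMod p,
      n ^ 2 - n * m + m ^ 2 + m + 1 = 0 ∧
      k ^ 2 - k * l + l ^ 2 + 1 = 0 ∧
      k * (m - 2 * n) + l * (n - 2 * m - 1) + 1 = 0) ↔
    IsSquare (5 : ZMod p) := by
  haveI : Fact p.Prime := ⟨hp⟩
  have h2 : (2 : ZMod p) ≠ 0 := by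
    intro h
    have : (p : ℕ) ∣ 2 := (ZMod.natCast_eq_zero_iff 2 p).mp (by exact_mod_cast h)
    have := Nat.le_of_dvd (by norm_num) this
    omega
  have h3' : (3 : ZMod p) ≠ 0 := by
    intro h
    have : (p : ℕ) ∣ 3 := (ZMod.natCast_eq_zero_iff 3 p).mp (by exact_mod_cast h)
    have := Nat.le_of_dvd (by norm_num) this
    omega
  have h4 : (4 : ZMod p) ≠ 0 := by
    have := mul_ne_zero h2 h2
    norm_num at this
    exact this
  have h8 : (8 : ZMod p) ≠ 0 := by
    have := mul_ne_zero h4 h2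
    norm_num at this
    exact this
  have h16 : (16 : ZMod p) ≠ 0 := by
    have := mul_ne_zero h4 h4
    norm_num at this
    exact this
  have h64 : (64 : ZMod p) ≠ 0 := by
    have := mul_ne_zero h16 h4
    norm_num at this
    exact this
  constructor
  · rintro ⟨n, m, k, l, h1, hpure, hmix⟩
    have hu : (2*n - m)^2 = -(3*m^2 + 4*m + 4) := by linear_combination 4*h1
    have hv : (2*k - l)^2 = -(3*l^2 + 4) := by linear_combination 4*hpure
    have huv : (2*n - m)*(2*k - l) = 2 - l*(3*m + 2) := by linear_combination -2*hmix
    have key : (3*m^2 + 4*m + 4)*(3*l^2 + 4) = (2 - l*(3*m + 2))^2 := by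
      linear_combination (-(2*k - l)^2) * hu + (3*m^2 + 4*m + 4) * hv +
        ((2*n - m)*(2*k - l) + 2 - l*(3*m + 2)) * huv
    have hC4 : 4*(2*l^2 + (3*m + 2)*l + 3*m^2 + 4*m + 3) = 0 := by linear_combination key
    have hC : 2*l^2 + (3*m + 2)*l + 3*m^2 + 4*m + 3 = 0 := by
      rcases mul_eq_zero.mp hC4 with h | h
      · exact absurd h h4
      · exact h
    have ht : (4*l + 3*m + 2)^2 = 5*(2*n - m)^2 := by linear_combination 8*hC - 5*hu
    by_cases hu0 : 2*n - m = 0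
    · rw [hu0] at hu ht
      have hA : 3*m^2 + 4*m + 4 = 0 := by linear_combination hu
      have hl : 4*l + 3*m + 2 = 0 := by
        have := pow_eq_zero_iff (n := 2) (by norm_num) |>.mp (by rw [ht]; ring)
        exact this
      have hL : 2*l^2 + 1 = 0 := by linear_combination -hC + hA + l*hl
      refine ⟨-2*(2*k - l)*l, ?_⟩
      linear_combination -(4*l^2)*hv + (6*l^2 + 5)*hL
    · refine ⟨(4*l + 3*m + 2)/(2*n - m), ?_⟩
      rw [div_mul_div_comm, eq_div_iff (mul_ne_zero hu0 hu0)]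
      linear_combination -ht
  · rintro ⟨r, hr⟩
    have hcardodd : Fintype.card (ZMod p) % 2 = 1 := by
      rw [ZMod.card]
      exact Nat.odd_iff.mp (hp.odd_of_ne_two (by omega))
    have hfdeg : degree (C (3:ZMod p) * X^2 + C 4 * X + C 4) = 2 := degree_quadratic h3'
    have hgdeg : degree ((X : (ZMod p)[X])^2) = 2 := degree_X_pow 2
    obtain ⟨a, b, hab⟩ := FiniteField.exists_root_sum_quadratic hfdeg hgdeg hcardodd
    have hconic : 3*a^2 + 4*a + 4 + b^2 = 0 := by simpa using hab
    refine ⟨(a + b)/2, a, ((r - 3)*b - (r + 1)*(3*a + 2))/8, (r*b - (3*a + 2))/4, ?_, ?_, ?_⟩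
    · set n₀ : ZMod p := (a + b)/2 with hn
      have e1 : 2*n₀ = a + b := by rw [hn]; field_simp
      have g4 : 4*(n₀^2 - n₀*a + a^2 + a + 1) = 0 := by
        linear_combination (2*n₀ + b - a)*e1 + hconic
      rcases mul_eq_zero.mp g4 with h | h
      · exact absurd h h4
      · exact h
    · set k₀ : ZMod p := ((r - 3)*b - (r + 1)*(3*a + 2))/8 with hk
      set l₀ : ZMod p := (r*b - (3*a + 2))/4 with hl
      have e3 : 8*k₀ = (r - 3)*b - (r + 1)*(3*a + 2) := by rw [hk]; field_simp [h8]
      have e2 : 4*l₀ = r*b - (3*a + 2) := by rw [hl]; field_simp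
      have g64 : 64*(k₀^2 - k₀*l₀ + l₀^2 + 1) = 0 := by
        linear_combination (8*k₀ + (r - 3)*b - (r + 1)*(3*a + 2))*e3 - 2*(4*l₀)*e3
          - 2*((r - 3)*b - (r + 1)*(3*a + 2))*e2 + 4*(4*l₀ + r*b - (3*a + 2))*e2
          + 24*hconic - ((3*a + 2)^2 + 3*b^2)*hr
      rcases mul_eq_zero.mp g64 with h | h
      · exact absurd h h64
      · exact h
    · set n₀ : ZMod p := (a + b)/2 with hn
      set k₀ : ZMod p := ((r - 3)*b - (r + 1)*(3*a + 2))/8 with hk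
      set l₀ : ZMod p := (r*b - (3*a + 2))/4 with hl
      have e1 : 2*n₀ = a + b := by rw [hn]; field_simp
      have e3 : 8*k₀ = (r - 3)*b - (r + 1)*(3*a + 2) := by rw [hk]; field_simp [h8]
      have e2 : 4*l₀ = r*b - (3*a + 2) := by rw [hl]; field_simp
      have g16 : 16*(k₀*(a - 2*n₀) + l₀*(n₀ - 2*a - 1) + 1) = 0 := by
        linear_combination 2*(a - 2*n₀)*e3 - 2*((r - 3)*b - (r + 1)*(3*a + 2))*e1
          + 4*(n₀ - 2*a - 1)*e2 + 2*(r*b - (3*a + 2))*e1 + 6*hconic + 0*hr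
      rcases mul_eq_zero.mp g16 with h | h
      · exact absurd h h16
      · exact h
end
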